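/- Let (W,S) be a Coxeter group, w ∈ W, (s,t) ∈ 𝔐, and let reduced expressions →a, →b for w be such that →b is obtained from →a by an (s,t)-braid move, with q ∈ W such that Invs →b is obtained from Invs →a by replacing a factor q ρ_{s,t} q⁻¹ by its reversal. Set s' = qsq⁻¹, t' = qtq⁻¹. Then has_{s',t'} →a = 1 and has_{s',t'} →b = 0 (i.e., ρ_{s',t'} appears as a subword of Invs →a but not of Invs →b). -/

import Mathlib

/-- The word `(s, t, s, t, …)` with `m` letters. -/
def altList {α : Type*} (s t : α) (m : ℕ) : List α :=
  (List.range m).map (fun k => if k % 2 = 0 then s else t)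

/-- The word `ρ_{s,t} = ((st)^0 s, (st)^1 s, …, (st)^{m-1} s)`. -/
def rhoWord {W : Type*} [Group W] (s t : W) (m : ℕ) : List W :=
  (List.range m).map (fun k => (s * t) ^ k * s)

/-- `b` is obtained from `a` by an `(s_i, s_j)`-braid move. -/
def IsBraidMove {B W : Type*} [Group W] {M : CoxeterMatrix B}
    (cs : CoxeterSystem M W) (i j : B) (a b : List B) : Prop :=
  i ≠ j ∧ M.M i j ≠ 0 ∧
  ∃ p : ℕ, p + M.M i j ≤ a.length ∧
    a = a.take p ++ altList i j (M.M i j) ++ a.drop (p + M.M i j) ∧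
    b = a.take p ++ altList j i (M.M i j) ++ a.drop (p + M.M i j)

/-
Since `→a` is reduced, the entries of `Invs →a` are distinct, in particular those of its factor
`q ρ_{s,t} q⁻¹ = ρ_{s',t'}` of length `m = m_{s,t}`. As `(s't')^m = 1`, distinctness of the
`(s't')^k s'` for `k < m` forces `orderOf (s't') = m`, so `ρ_{s',t'}` is that factor. In `Invs →b`,
whose entries are distinct as well, a subword using only letters of the reversed factor must be a
subword of it; but a repetition-free word of length `≥ 2` is not a subword of its reversal, which
it would then equal, making its first and last letters coincide.
-/

namespace List

theorem Sublist.sublist_of_subset_of_nodup_append {α : Type*} {l X R Y : List α}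
    (h : l <+ X ++ R ++ Y) (hl : l ⊆ R) (hnd : (X ++ R ++ Y).Nodup) : l <+ R := by
  classical
  obtain ⟨hXR, -, hRY⟩ := nodup_append.1 hnd
  obtain ⟨-, -, hXR⟩ := nodup_append.1 hXR
  have hX : X.filter (· ∈ R) = [] :=
    filter_eq_nil_iff.2 fun a ha haR => hXR a ha a (by simpa using haR) rfl
  have hR : R.filter (· ∈ R) = R := filter_eq_self.2 fun a ha => by simpa using ha
  have hY : Y.filter (· ∈ R) = [] :=
    filter_eq_nil_iff.2 fun b hb hbR => hRY b (mem_append_right X (by simpa using hbR)) b hb rfl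
  simpa [filter_append, hX, hR, hY, filter_eq_self.2 fun a ha => decide_eq_true (hl ha)]
    using h.filter (· ∈ R)

theorem Nodup.not_sublist_reverse {α : Type*} {l : List α} (hnd : l.Nodup)
    (hl : 2 ≤ l.length) : ¬ l <+ l.reverse := by
  intro h
  have hrev : l.reverse = l := (h.eq_of_length l.length_reverse.symm).symm
  have hfirst := getElem_of_eq hrev (by rw [length_reverse]; omega : 0 < l.reverse.length)
  rw [getElem_reverse] at hfirst
  have := (hnd.getElem_inj_iff).1 hfirst
  omega

end List

theorem length_rhoWord {W : Type*} [Group W] (s t : W) (m : ℕ) : (rhoWord s t m).length = m := by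
  simp [rhoWord]

theorem map_rhoWord {G H F : Type*} [Group G] [Group H] [FunLike F G H] [MonoidHomClass F G H]
    (f : F) (s t : G) (m : ℕ) : (rhoWord s t m).map f = rhoWord (f s) (f t) m := by
  simp [rhoWord, Function.comp_def]

theorem map_conj_rhoWord {W : Type*} [Group W] (q s t : W) (m : ℕ) :
    (rhoWord s t m).map (fun x => q * x * q⁻¹) = rhoWord (q * s * q⁻¹) (q * t * q⁻¹) m :=
  map_rhoWord (MulAut.conj q) s t m

theorem orderOf_mul_eq_of_nodup_rhoWord {W : Type*} [Group W] {s t : W} {m : ℕ} (hm : 0 < m)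
    (hpow : (s * t) ^ m = 1) (hnd : (rhoWord s t m).Nodup) : orderOf (s * t) = m := by
  refine (orderOf_le_of_pow_eq_one hm hpow).antisymm (not_lt.1 fun hlt => ?_)
  have := List.inj_on_of_nodup_map hnd (List.mem_range.2 hm) (List.mem_range.2 hlt)
    (by simp [pow_orderOf_eq_one])
  exact (orderOf_pos_iff.2 (isOfFinOrder_iff_pow_eq_one.2 ⟨m, hm, hpow⟩)).ne this

theorem has_s't'_flip_general {B W : Type*} [Group W] {M : CoxeterMatrix B}
    (cs : CoxeterSystem M W) (i j : B) (hij : i ≠ j) (hfin : M.M i j ≠ 0)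
    (a b : List B)
    (ha : cs.IsReduced a)
    (hb : cs.IsReduced b)
    (q : W)
    (hrepl : ∃ X Y : List W,
      cs.leftInvSeq a = X ++ (rhoWord (cs.simple i) (cs.simple j) (M.M i j)).map
        (fun x => q * x * q⁻¹) ++ Y ∧
      cs.leftInvSeq b = X ++ ((rhoWord (cs.simple i) (cs.simple j) (M.M i j)).map
        (fun x => q * x * q⁻¹)).reverse ++ Y) :
    List.Sublist
      (rhoWord (q * cs.simple i * q⁻¹) (q * cs.simple j * q⁻¹)
        (orderOf ((q * cs.simple i * q⁻¹) * (q * cs.simple j * q⁻¹))))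
      (cs.leftInvSeq a) ∧
    ¬ List.Sublist
      (rhoWord (q * cs.simple i * q⁻¹) (q * cs.simple j * q⁻¹)
        (orderOf ((q * cs.simple i * q⁻¹) * (q * cs.simple j * q⁻¹))))
      (cs.leftInvSeq b) := by
  obtain ⟨X, Y, hA, hB⟩ := hrepl
  have hm : 2 ≤ M.M i j := by have := M.off_diagonal i j hij; omega
  rw [map_conj_rhoWord] at hA hB
  have hsub_a : (rhoWord _ _ (M.M i j)).Sublist (cs.leftInvSeq a) :=
    hA ▸ (List.infix_append X _ Y).sublist
  have hnd := ha.nodup_leftInvSeq.sublist hsub_a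
  have hpow : ((q * cs.simple i * q⁻¹) * (q * cs.simple j * q⁻¹)) ^ M.M i j = 1 := by
    have hconj : (q * cs.simple i * q⁻¹) * (q * cs.simple j * q⁻¹)
        = MulAut.conj q (cs.simple i * cs.simple j) := by
      rw [MulAut.conj_apply]; group
    rw [hconj, ← map_pow, cs.simple_mul_simple_pow, map_one]
  rw [orderOf_mul_eq_of_nodup_rhoWord (by omega) hpow hnd]
  refine ⟨hsub_a, fun hsub_b => ?_⟩
  rw [hB] at hsub_b
  exact hnd.not_sublist_reverse (by rw [length_rhoWord]; exact hm)
    (hsub_b.sublist_of_subset_of_nodup_append (fun x hx => List.mem_reverse.2 hx)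
      (hB ▸ hb.nodup_leftInvSeq))

/-- In the situation of a braid move `→a → →b` with conjugator `q`,
setting `s' = qsq⁻¹` and `t' = qtq⁻¹`, the word `ρ_{s',t'}` appears as a subword of
`Invs →a` (i.e. `has_{s',t'} →a = 1`) but not of `Invs →b` (i.e. `has_{s',t'} →b = 0`). -/
theorem has_s't'_flip {B W : Type*} [Group W] {M : CoxeterMatrix B}
    (cs : CoxeterSystem M W) (w : W) (i j : B) (hij : i ≠ j) (hfin : M.M i j ≠ 0)
    (a b : List B)
    (ha : cs.IsReduced a) (haw : cs.wordProd a = w)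
    (hb : cs.IsReduced b) (hbw : cs.wordProd b = w)
    (hmove : IsBraidMove cs i j a b)
    (q : W)
    (hrepl : ∃ X Y : List W,
      cs.leftInvSeq a = X ++ (rhoWord (cs.simple i) (cs.simple j) (M.M i j)).map
        (fun x => q * x * q⁻¹) ++ Y ∧
      cs.leftInvSeq b = X ++ ((rhoWord (cs.simple i) (cs.simple j) (M.M i j)).map
        (fun x => q * x * q⁻¹)).reverse ++ Y) :
    List.Sublist
      (rhoWord (q * cs.simple i * q⁻¹) (q * cs.simple j * q⁻¹)
        (orderOf ((q * cs.simple i * q⁻¹) * (q * cs.simple j * q⁻¹))))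
      (cs.leftInvSeq a) ∧
    ¬ List.Sublist
      (rhoWord (q * cs.simple i * q⁻¹) (q * cs.simple j * q⁻¹)
        (orderOf ((q * cs.simple i * q⁻¹) * (q * cs.simple j * q⁻¹))))
      (cs.leftInvSeq b) :=
  has_s't'_flip_general cs i j hij hfin a b ha hb q hrepl
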